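/- For α = 1 and β = 0, the set {F_{1,0}(m) : m ∈ Z}, where F_{1,0}(m) = ⌊m/τ + 1⌋ + mτ, equals the cut-and-project set F(Ω) = {n ∈ Z[τ] : n* ∈ (0,1]} with acceptance window Ω = (0,1]. -/
import Mathlib


noncomputable def goldenτ : ℝ := (1 + Real.sqrt 5) / 2

/-- F_{1,0}(m) = ⌊m/τ + 1⌋ + mτ. -/
noncomputable def F10 (m : ℤ) : ℝ := (⌊(m : ℝ) / goldenτ + 1⌋ : ℤ) + m * goldenτ

lemma goldenτ_pos : 0 < goldenτ := by
  have h5 : (0:ℝ) < Real.sqrt 5 := Real.sqrt_pos.mpr (by norm_num)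
  unfold goldenτ; linarith

lemma goldenτ_sq : goldenτ * goldenτ = goldenτ + 1 := by
  have h5 : Real.sqrt 5 * Real.sqrt 5 = 5 := Real.mul_self_sqrt (by norm_num)
  unfold goldenτ; nlinarith

lemma one_sub_goldenτ (b : ℤ) : (b:ℝ) * (1 - goldenτ) = -((b:ℝ) / goldenτ) := by
  have h := goldenτ_sq
  have hne : goldenτ ≠ 0 := ne_of_gt goldenτ_pos
  have key : 1 - goldenτ = -(1/goldenτ) := by
    field_simp
    nlinarith
  rw [key]; ring

/-- {F_{1,0}(m) : m ∈ Z} = F(Ω) = {n ∈ Z[τ] : n* ∈ (0,1]}. -/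
theorem F10_eq_cutProject :
    {x : ℝ | ∃ m : ℤ, x = F10 m}
      = {x : ℝ | ∃ a b : ℤ, x = a + b * goldenτ ∧
          (a : ℝ) + b * (1 - goldenτ) ∈ Set.Ioc (0 : ℝ) 1} := by
  ext x
  simp only [Set.mem_setOf_eq]
  constructor
  · rintro ⟨m, rfl⟩
    refine ⟨⌊(m : ℝ) / goldenτ + 1⌋, m, rfl, ?_⟩
    have h1 := Int.floor_le ((m : ℝ) / goldenτ + 1)
    have h2 := Int.lt_floor_add_one ((m : ℝ) / goldenτ + 1)
    rw [one_sub_goldenτ]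
    constructor <;> [linarith; linarith]
  · rintro ⟨a, b, rfl, h⟩
    refine ⟨b, ?_⟩
    rw [one_sub_goldenτ] at h
    obtain ⟨h1, h2⟩ := h
    have : ⌊(b : ℝ) / goldenτ + 1⌋ = a := by
      rw [Int.floor_eq_iff]
      constructor <;> linarith
    unfold F10
    rw [this]
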